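/- arXiv:math/0402075 — 3 statements merged into one kernel-verified Lean document; each statement's English description precedes it below -/
import Mathlib

section
/- Let H be a finite dimensional hereditary algebra and T a tilting H-module. If X is a module with Hom(T, X) = 0, then the minimal left add(τT)-approximation X → C is a monomorphism, where τ denotes the Auslander–Reiten translate. -/
open CategoryTheory

/-- `Ext¹` of modules, as an abelian group (`ℤ`-module). -/
noncomputable def ext1 (Λ : Type) [Ring Λ] (M N : ModuleCat Λ) : ModuleCat ℤ :=
  ((Ext ℤ (ModuleCat Λ) 1).obj (Opposite.op M)).obj N

/-- `X ∈ add T`: `X` is a direct summand of a finite direct sum of copies of `T`. -/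
def memAdd (Λ : Type) [Ring Λ] (T X : ModuleCat Λ) : Prop :=
  ∃ (n : ℕ) (i : X →ₗ[Λ] (Fin n → T)) (p : (Fin n → T) →ₗ[Λ] X),
    p ∘ₗ i = LinearMap.id

/-- `X ∈ Sub T`: `X` is a submodule of a module in `add T`. -/
def memSub (Λ : Type) [Ring Λ] (T X : ModuleCat Λ) : Prop :=
  ∃ (n : ℕ) (i : X →ₗ[Λ] (Fin n → T)), Function.Injective i

/-- `T` is a tilting module: `pd T ≤ 1`, `Ext¹(T,T) = 0`, and there is an exact sequence
`0 → Λ → T₀ → T₁ → 0` with `T₀, T₁ ∈ add T`. -/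
structure IsTilting (Λ : Type) [Ring Λ] (T : ModuleCat Λ) : Prop where
  pd : ∃ (n : ℕ) (p : (Fin n → Λ) →ₗ[Λ] T), Function.Surjective p ∧
    Projective (ModuleCat.of Λ ↥(LinearMap.ker p))
  ext_vanish : Limits.IsZero (ext1 Λ T T)
  cores : ∃ (T₀ T₁ : ModuleCat.{0} Λ), memAdd Λ T T₀ ∧ memAdd Λ T T₁ ∧
    ∃ (f : Λ →ₗ[Λ] T₀) (g : T₀ →ₗ[Λ] T₁),
      Function.Injective f ∧ Function.Surjective g ∧ LinearMap.range f = LinearMap.ker g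

/-- `f : A → C` is a minimal left `add N`-approximation. -/
def IsMinimalLeftAddApprox (Λ : Type) [Ring Λ] (N A C : ModuleCat Λ)
    (f : A →ₗ[Λ] C) : Prop :=
  memAdd Λ N C ∧
  (∀ (N' : ModuleCat.{0} Λ), memAdd Λ N N' → ∀ g : A →ₗ[Λ] N',
    ∃ h : C →ₗ[Λ] N', h ∘ₗ f = g) ∧
  (∀ e : C →ₗ[Λ] C, e ∘ₗ f = f → Function.Bijective e)

/-!
Since `Hom(T, X) = 0`, `X` lies in the torsion-free class `Sub(τT)`, i.e. it embeds into some
`(τT)ⁿ ∈ add(τT)`. That embedding factors through the approximation `f`, so `f` is injective.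
The hypotheses on `Sub(τT)` and on `f` only speak about modules in `ModuleCat.{0} H`; the
modules at hand are finitely generated, hence small, so they can be shrunk into that universe.
-/

lemma forall_linearMap_eq_zero_of_linearEquiv {R M X Y : Type*} [Semiring R]
    [AddCommMonoid M] [Module R M] [AddCommMonoid X] [Module R X] [AddCommMonoid Y] [Module R Y]
    (h : ∀ g : M →ₗ[R] X, g = 0) (e : X ≃ₗ[R] Y) (g : M →ₗ[R] Y) : g = 0 :=
  LinearMap.ext fun m => e.symm.injective <| by
    simpa using LinearMap.congr_fun (h (e.symm.toLinearMap ∘ₗ g)) m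

section

variable {Λ : Type} [Ring Λ]

lemma memSub_of_linearEquiv {N A B : ModuleCat Λ} (e : A ≃ₗ[Λ] B) (hB : memSub Λ N B) :
    memSub Λ N A :=
  let ⟨n, i, hi⟩ := hB
  ⟨n, i ∘ₗ e.toLinearMap, hi.comp e.injective⟩

lemma memAdd_of_linearEquiv_pi {N : ModuleCat Λ} {M : Type*} [AddCommGroup M] [Module Λ M]
    {n : ℕ} (e : M ≃ₗ[Λ] (Fin n → N)) : memAdd Λ N (ModuleCat.of Λ M) :=
  ⟨n, e.toLinearMap, e.symm.toLinearMap, by ext; simp⟩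

lemma IsMinimalLeftAddApprox.injective_of_memSub {N A C : ModuleCat Λ} [Small.{0} N]
    {f : A →ₗ[Λ] C} (hf : IsMinimalLeftAddApprox Λ N A C f) (hA : memSub Λ N A) :
    Function.Injective f := by
  obtain ⟨n, i, hi⟩ := hA
  let e := (Shrink.linearEquiv Λ (Fin n → N)).symm
  obtain ⟨h, hhf⟩ := hf.2.1 _ (memAdd_of_linearEquiv_pi e.symm) (e.toLinearMap ∘ₗ i)
  have hinj : Function.Injective (h ∘ₗ f) := hhf ▸ e.injective.comp hi
  exact Function.Injective.of_comp (f := h) hinj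

end

theorem stmt8_general (H : Type) [Ring H]
    (T : ModuleCat H)
    (τT : ModuleCat H) [Module.Finite H τT]
    (hτT : ∀ Y : ModuleCat.{0} H, Module.Finite H Y →
      ((∀ f : T →ₗ[H] Y, f = 0) ↔ memSub H τT Y))
    (X C : ModuleCat H) [Module.Finite H X]
    (hX : ∀ f : T →ₗ[H] X, f = 0)
    (f : X →ₗ[H] C) (happrox : IsMinimalLeftAddApprox H τT X C f) :
    Function.Injective f := by
  have : Small.{0} τT := Module.Finite.small H τT
  have : Small.{0} X := Module.Finite.small H X
  let e := (Shrink.linearEquiv H X).symm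
  have hX_sub : memSub H τT X := memSub_of_linearEquiv e <|
    (hτT (ModuleCat.of H (Shrink.{0} X)) inferInstance).mp
      (forall_linearMap_eq_zero_of_linearEquiv hX e)
  exact happrox.injective_of_memSub hX_sub

/-- Let `H` be a finite dimensional hereditary algebra and `T` a tilting module, with `τT` the
Auslander–Reiten translate of `T`, so that the torsion-free class `{X : Hom(T,X) = 0}` equals
`Sub(τT)`.  If `X` is a finitely generated module with `Hom(T, X) = 0`, then the minimal left
`add(τT)`-approximation `X → C` is a monomorphism. -/
theorem stmt8 (k : Type) [Field k] (H : Type) [Ring H] [Algebra k H]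
    [FiniteDimensional k H]
    (hher : ∀ P : ModuleCat H, Projective P →
      ∀ N : Submodule H P, Projective (ModuleCat.of H N))
    (T : ModuleCat H) [Module.Finite H T] (hT : IsTilting H T)
    (τT : ModuleCat H) [Module.Finite H τT]
    (hτT : ∀ Y : ModuleCat.{0} H, Module.Finite H Y →
      ((∀ f : T →ₗ[H] Y, f = 0) ↔ memSub H τT Y))
    (X C : ModuleCat H) [Module.Finite H X] [Module.Finite H C]
    (hX : ∀ f : T →ₗ[H] X, f = 0)
    (f : X →ₗ[H] C) (happrox : IsMinimalLeftAddApprox H τT X C f) :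
    Function.Injective f :=
  stmt8_general H T τT hτT X C hX f happrox
end

section
/- Let C be the cluster category of a hereditary algebra H and T a tilting object with Γ = End_C(T)^op. Let M be a non-projective indecomposable Γ-module corresponding to an object of C/add(τT), and let A → B → C₀ → A[1] be the AR-triangle in C ending at the corresponding object C₀. Then the induced sequence 0 → Ã → B̃ → M → 0 in mod Γ is an almost split (AR) sequence; in particular Ã ≅ τ_Γ M. -/
open CategoryTheory Limits Pretriangulated Opposite

universe v u

/-- `X ∈ add T`: `X` is a direct summand of a finite direct sum of copies of `T`. -/
def memAddC {C : Type u} [Category.{v} C] [Preadditive C] [HasFiniteBiproducts C]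
    (T X : C) : Prop :=
  ∃ (n : ℕ) (i : X ⟶ ⨁ (fun _ : Fin n => T)) (p : ⨁ (fun _ : Fin n => T) ⟶ X),
    i ≫ p = 𝟙 X

/-- `T` is a tilting object: `Hom_C(T, X[1]) = 0` if and only if `X ∈ add T`. -/
def IsTiltingObject {C : Type u} [Category.{v} C] [Preadditive C] [HasFiniteBiproducts C]
    [HasShift C ℤ] (T : C) : Prop :=
  ∀ X : C, (∀ f : T ⟶ X⟦(1 : ℤ)⟧, f = 0) ↔ memAddC T X

/-- A morphism factors through an object of `add N`. -/
def factorsThroughAdd {C : Type u} [Category.{v} C] [Preadditive C] [HasFiniteBiproducts C]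
    (N : C) {X Y : C} (f : X ⟶ Y) : Prop :=
  ∃ (Z : C) (_ : memAddC N Z) (g : X ⟶ Z) (h : Z ⟶ Y), g ≫ h = f

/-- An object of an additive category is indecomposable if it is nonzero and its only
idempotent endomorphisms are `0` and the identity. -/
def IndecC {C : Type u} [Category.{v} C] [Preadditive C] [HasZeroObject C] (X : C) : Prop :=
  (¬ IsZero X) ∧ ∀ e : X ⟶ X, e ≫ e = e → e = 0 ∨ e = 𝟙 X

/-- Old (Dec 2024) left action of `End X` (for `X : Cᵒᵖ`) on `unop X ⟶ Y`. -/
instance endOpMulActionLeftOld {C : Type u} [Category.{v} C] {X : Cᵒᵖ} {Y : C} :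
    MulAction (End X) (unop X ⟶ Y) where
  smul r f := r.unop ≫ f
  one_smul := Category.id_comp
  mul_smul _ _ _ := Category.assoc _ _ _

/-- Old (Dec 2024) `Module (End X) (unop X ⟶ Y)` instance. -/
instance endOpModuleLeftOld {C : Type u} [Category.{v} C] [Preadditive C] {X : Cᵒᵖ} {Y : C} :
    Module (End X) (unop X ⟶ Y) where
  smul_add _ _ _ := Preadditive.comp_add _ _ _ _ _ _
  smul_zero _ := Limits.comp_zero
  add_smul _ _ _ := Preadditive.add_comp _ _ _ _ _ _
  zero_smul _ := Limits.zero_comp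

/-- The old (Dec 2024) `preadditiveCoyonedaObj`: for `X : Cᵒᵖ`, the functor
`C ⥤ ModuleCat (End X)`, `Y ↦ (unop X ⟶ Y)`. -/
def preadditiveCoyonedaObjOld {C : Type u} [Category.{v} C] [Preadditive C] (X : Cᵒᵖ) :
    C ⥤ ModuleCat.{v} (End X) where
  obj Y := ModuleCat.of _ (unop X ⟶ Y)
  map f := ModuleCat.ofHom
    { toFun := fun g => g ≫ f
      map_add' := fun _ _ => Preadditive.add_comp _ _ _ _ _ _
      map_smul' := fun r g => by
        first
          | exact (Category.assoc r.unop g f).symm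
          | exact Category.assoc r.unop g f }

/-!
The functor `G = Hom(T, -)` is full, essentially surjective onto finitely generated modules, and
kills exactly the maps factoring through `add τT`; right and left almost split maps therefore
stay almost split after applying `G`, and since `C₀ ∉ add τT` a splitting of `G b` would lift to
one of `b`. The sequence is exact by the long exact `Hom(T, -)` sequence of the triangle: `G b` is
onto because `C₀ ∉ add T`, so every `T ⟶ C₀` factors through `b`, and `G a` is injective because
every map `T⟦1⟧ ≅ τT ⟶ C₀` factors through `b` and is thus killed by `c`.
-/

section AddCategory

variable {C : Type u} [Category.{v} C] [Preadditive C] [HasFiniteBiproducts C]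

lemma memAddC_self (N : C) : memAddC N N :=
  ⟨1, biproduct.ι (fun _ : Fin 1 => N) 0, biproduct.π (fun _ : Fin 1 => N) 0,
    biproduct.ι_π_self _ _⟩

lemma memAddC.of_retract {N X Y : C} (s : X ⟶ Y) (r : Y ⟶ X) (hsr : s ≫ r = 𝟙 X)
    (hY : memAddC N Y) : memAddC N X := by
  obtain ⟨n, i, p, hip⟩ := hY
  exact ⟨n, s ≫ i, p ≫ r, by simp only [Category.assoc, reassoc_of% hip, hsr]⟩

lemma memAddC.of_iso {N X Y : C} (e : X ≅ Y) (hY : memAddC N Y) : memAddC N X :=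
  hY.of_retract e.hom e.inv e.hom_inv_id

end AddCategory

section AlmostSplit

variable {C : Type u} [Category.{v} C]

def IsRightAlmostSplit {B C₀ : C} (b : B ⟶ C₀) : Prop :=
  ∀ (Y : C) (g : Y ⟶ C₀), (¬ ∃ s : C₀ ⟶ Y, s ≫ g = 𝟙 C₀) → ∃ u : Y ⟶ B, u ≫ b = g

def IsLeftAlmostSplit {A B : C} (a : A ⟶ B) : Prop :=
  ∀ (Y : C) (g : A ⟶ Y), (¬ ∃ s : Y ⟶ A, g ≫ s = 𝟙 A) → ∃ u : B ⟶ Y, a ≫ u = g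

variable {D : Type*} [Category D] (F : C ⥤ D) [F.Full]

lemma IsRightAlmostSplit.map {B C₀ : C} {b : B ⟶ C₀} (hb : IsRightAlmostSplit b)
    {Y : D} (hY : F.essImage Y) (g : Y ⟶ F.obj C₀) (hg : ¬ ∃ s : F.obj C₀ ⟶ Y, s ≫ g = 𝟙 _) :
    ∃ u : Y ⟶ F.obj B, u ≫ F.map b = g := by
  obtain ⟨X, ⟨e⟩⟩ := hY
  have hns : ¬ ∃ s : C₀ ⟶ X, s ≫ F.preimage (e.hom ≫ g) = 𝟙 C₀ := by
    rintro ⟨s, hs⟩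
    refine hg ⟨F.map s ≫ e.hom, ?_⟩
    simpa only [Category.assoc, F.map_comp, F.map_preimage, F.map_id] using congr_arg F.map hs
  obtain ⟨u, hu⟩ := hb X _ hns
  refine ⟨e.inv ≫ F.map u, ?_⟩
  rw [Category.assoc, ← F.map_comp, hu, F.map_preimage, e.inv_hom_id_assoc]

lemma IsLeftAlmostSplit.map {A B : C} {a : A ⟶ B} (ha : IsLeftAlmostSplit a)
    {Y : D} (hY : F.essImage Y) (g : F.obj A ⟶ Y) (hg : ¬ ∃ s : Y ⟶ F.obj A, g ≫ s = 𝟙 _) :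
    ∃ u : F.obj B ⟶ Y, F.map a ≫ u = g := by
  obtain ⟨X, ⟨e⟩⟩ := hY
  have hns : ¬ ∃ s : X ⟶ A, F.preimage (g ≫ e.inv) ≫ s = 𝟙 A := by
    rintro ⟨s, hs⟩
    refine hg ⟨e.inv ≫ F.map s, ?_⟩
    simpa only [← Category.assoc, F.map_comp, F.map_preimage, F.map_id] using congr_arg F.map hs
  obtain ⟨u, hu⟩ := ha X _ hns
  refine ⟨F.map u ≫ e.hom, ?_⟩
  rw [← Category.assoc, ← F.map_comp, hu, F.map_preimage, Category.assoc, e.inv_hom_id,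
    Category.comp_id]

end AlmostSplit

section RightAlmostSplit

variable {C : Type u} [Category.{v} C] [Preadditive C] [HasFiniteBiproducts C]
  {N B C₀ : C} {b : B ⟶ C₀}

lemma IsRightAlmostSplit.factors_of_memAddC (hb : IsRightAlmostSplit b)
    (hC₀ : ¬ memAddC N C₀) {Z : C} (hZ : memAddC N Z) (h : Z ⟶ C₀) :
    ∃ u : Z ⟶ B, u ≫ b = h :=
  hb Z h fun ⟨s, hs⟩ => hC₀ (hZ.of_retract s h hs)

lemma IsRightAlmostSplit.not_splitEpi_map {D : Type*} [Category D] [Preadditive D]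
    (F : C ⥤ D) [F.Additive] [F.Full]
    (hker : ∀ ψ : C₀ ⟶ C₀, F.map ψ = 0 → factorsThroughAdd N ψ)
    (hb : IsRightAlmostSplit b) (hnonsplit : ¬ ∃ s : C₀ ⟶ B, s ≫ b = 𝟙 C₀)
    (hC₀ : ¬ memAddC N C₀) :
    ¬ ∃ s : F.obj C₀ ⟶ F.obj B, s ≫ F.map b = 𝟙 (F.obj C₀) := by
  rintro ⟨s, hs⟩
  -- `F` kills `F.preimage s ≫ b - 𝟙`, which therefore factors through `add N`, hence through `b`.
  have hkill : F.map (F.preimage s ≫ b - 𝟙 C₀) = 0 := by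
    rw [F.map_sub, F.map_comp, F.map_preimage, hs, F.map_id, sub_self]
  obtain ⟨Z, hZ, g, h, hgh⟩ := hker _ hkill
  obtain ⟨u, hu⟩ := hb.factors_of_memAddC hC₀ hZ h
  refine hnonsplit ⟨F.preimage s - g ≫ u, ?_⟩
  rw [Preadditive.sub_comp, Category.assoc, hu, hgh]
  abel

end RightAlmostSplit

section Coyoneda

variable {C : Type u} [Category.{v} C] [Preadditive C]

instance (X : Cᵒᵖ) : (preadditiveCoyonedaObjOld X).Additive where
  map_add {_ _ _ _} := by ext; exact Preadditive.comp_add _ _ _ _ _ _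

lemma IsRightAlmostSplit.coyoneda_map_surjective [HasFiniteBiproducts C] {X : Cᵒᵖ}
    {B C₀ : C} {b : B ⟶ C₀} (hb : IsRightAlmostSplit b) (hC₀ : ¬ memAddC (unop X) C₀) :
    Function.Surjective ((preadditiveCoyonedaObjOld X).map b) :=
  fun f => hb.factors_of_memAddC hC₀ (memAddC_self _) (show unop X ⟶ C₀ from f)

variable [HasZeroObject C] [HasShift C ℤ] [∀ n : ℤ, (shiftFunctor C n).Additive]
  [Pretriangulated C] {A B C₀ : C} {a : A ⟶ B} {b : B ⟶ C₀} {c : C₀ ⟶ A⟦(1 : ℤ)⟧}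

lemma IsRightAlmostSplit.comp_mor₃_eq_zero [HasFiniteBiproducts C]
    (htri : Triangle.mk a b c ∈ distTriang C) (hb : IsRightAlmostSplit b) {N Z : C}
    (hC₀ : ¬ memAddC N C₀) (hZ : memAddC N Z) (h : Z ⟶ C₀) : h ≫ c = 0 := by
  have hbc : b ≫ c = 0 := comp_distTriang_mor_zero₂₃ _ htri
  obtain ⟨u, rfl⟩ := hb.factors_of_memAddC hC₀ hZ h
  rw [Category.assoc, hbc, comp_zero]

lemma eq_zero_of_comp_mor₁_eq_zero (htri : Triangle.mk a b c ∈ distTriang C) {X : C}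
    (hc : ∀ g : X⟦(1 : ℤ)⟧ ⟶ C₀, g ≫ c = 0) (f : X ⟶ A) (hf : f ≫ a = 0) : f = 0 := by
  have hf₁ : f⟦(1 : ℤ)⟧' ≫ a⟦(1 : ℤ)⟧' = 0 := by rw [← Functor.map_comp, hf, Functor.map_zero]
  obtain ⟨g, hg⟩ := Triangle.coyoneda_exact₁ _ htri (f⟦(1 : ℤ)⟧') hf₁
  apply (shiftFunctor C (1 : ℤ)).map_injective
  rw [Functor.map_zero]
  exact hg.trans (hc g)

lemma coyoneda_map_mor₁_injective (htri : Triangle.mk a b c ∈ distTriang C) {X : Cᵒᵖ}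
    (hc : ∀ g : (unop X)⟦(1 : ℤ)⟧ ⟶ C₀, g ≫ c = 0) :
    Function.Injective ((preadditiveCoyonedaObjOld X).map a) := by
  refine (injective_iff_map_eq_zero ((preadditiveCoyonedaObjOld X).map a).hom).mpr ?_
  exact fun f => eq_zero_of_comp_mor₁_eq_zero htri hc f

lemma coyoneda_range_map_mor₁_eq_ker (htri : Triangle.mk a b c ∈ distTriang C) (X : Cᵒᵖ) :
    LinearMap.range ((preadditiveCoyonedaObjOld X).map a).hom =
      LinearMap.ker ((preadditiveCoyonedaObjOld X).map b).hom := by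
  have hab : a ≫ b = 0 := comp_distTriang_mor_zero₁₂ _ htri
  ext f
  constructor
  · rintro ⟨(g : unop X ⟶ A), rfl⟩
    change (g ≫ a) ≫ b = 0
    rw [Category.assoc, hab, comp_zero]
  · intro hf
    obtain ⟨g, hg⟩ := Triangle.coyoneda_exact₂ _ htri (show unop X ⟶ B from f) hf
    exact ⟨g, hg.symm⟩

end Coyoneda

/-- Let `C` be the cluster category of a hereditary algebra, `T` a tilting object,
`Γ = End_C(T)ᵒᵖ`, and `G = Hom_C(T,−)`, which induces the equivalence `C/add(τT) ≃ mod Γ` of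
the main theorem.  Let `C₀` be an indecomposable object of `C` not in `add(τT)` whose image
`G(C₀)` is a non-projective indecomposable `Γ`-module (i.e. `C₀ ∉ add T`), and let
`A → B → C₀ → A[1]` be the AR-triangle in `C` ending at `C₀` (so `A ≅ τC₀`, the triangle does
not split, `A → B` is left almost split and `B → C₀` is right almost split).  Then the induced
sequence `0 → G(A) → G(B) → G(C₀) → 0` in `mod Γ` is an almost split (AR) sequence; in
particular `G(A) ≅ τ_Γ G(C₀)`. -/
theorem stmt15 {C : Type u} [Category.{v} C] [Preadditive C] [HasZeroObject C]
    [HasShift C ℤ] [∀ n : ℤ, (shiftFunctor C n).Additive] [Pretriangulated C]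
    [HasFiniteBiproducts C]
    (k : Type v) [Field k] [Linear k C]
    (hfin : ∀ X Y : C, FiniteDimensional k (X ⟶ Y))
    (τ : C ⥤ C) [τ.Additive] [τ.IsEquivalence] (hτiso : τ ≅ shiftFunctor C (1 : ℤ))
    (T : C) (hT : IsTiltingObject T)
    (G : C ⥤ ModuleCat.{v} (End (op T))) (hG : G = preadditiveCoyonedaObjOld (op T))
    (hfull : ∀ (X Y : C) (φ : G.obj X ⟶ G.obj Y), ∃ ψ : X ⟶ Y, G.map ψ = φ)
    (hker : ∀ (X Y : C) (ψ : X ⟶ Y), G.map ψ = 0 ↔ factorsThroughAdd (τ.obj T) ψ)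
    (hfg : ∀ X : C, Module.Finite (End (op T)) (G.obj X))
    (hdense : ∀ Y : ModuleCat.{v} (End (op T)), Module.Finite (End (op T)) Y →
      ∃ X : C, Nonempty (G.obj X ≅ Y))
    -- the AR-triangle `A → B → C₀ → A[1]` ending at the indecomposable `C₀`
    (A B C₀ : C) (a : A ⟶ B) (b : B ⟶ C₀) (c : C₀ ⟶ A⟦(1 : ℤ)⟧)
    (htri : Triangle.mk a b c ∈ distTriang C)
    (hindA : IndecC A) (hindC : IndecC C₀)
    (hAτ : Nonempty (A ≅ τ.obj C₀))
    (hnonsplit : ¬ ∃ s : C₀ ⟶ B, s ≫ b = 𝟙 C₀)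
    (hras : ∀ (Y : C) (g : Y ⟶ C₀), (¬ ∃ s : C₀ ⟶ Y, s ≫ g = 𝟙 C₀) →
      ∃ u : Y ⟶ B, u ≫ b = g)
    (hlas : ∀ (Y : C) (g : A ⟶ Y), (¬ ∃ s : Y ⟶ A, g ≫ s = 𝟙 A) →
      ∃ u : B ⟶ Y, a ≫ u = g)
    -- `G(C₀)` corresponds to a non-projective indecomposable `Γ`-module
    (hC₀ : ¬ memAddC (τ.obj T) C₀) (hnp : ¬ memAddC T C₀) :
    Function.Injective (G.map a) ∧
    Function.Surjective (G.map b) ∧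
    LinearMap.range (G.map a).hom = LinearMap.ker (G.map b).hom ∧
    (¬ ∃ s : G.obj C₀ ⟶ G.obj B, s ≫ G.map b = 𝟙 (G.obj C₀)) ∧
    (∀ (Y : ModuleCat.{v} (End (op T))), Module.Finite (End (op T)) Y →
      ∀ g : Y ⟶ G.obj C₀, (¬ ∃ s : G.obj C₀ ⟶ Y, s ≫ g = 𝟙 (G.obj C₀)) →
        ∃ u : Y ⟶ G.obj B, u ≫ G.map b = g) ∧
    (∀ (Y : ModuleCat.{v} (End (op T))), Module.Finite (End (op T)) Y →
      ∀ g : G.obj A ⟶ Y, (¬ ∃ s : Y ⟶ G.obj A, g ≫ s = 𝟙 (G.obj A)) →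
        ∃ u : G.obj B ⟶ Y, G.map a ≫ u = g) := by
  subst hG
  have : (preadditiveCoyonedaObjOld (op T)).Full := ⟨fun φ => hfull _ _ φ⟩
  have hb : IsRightAlmostSplit b := hras
  have hshift : memAddC (τ.obj T) (T⟦(1 : ℤ)⟧) := (memAddC_self _).of_iso (hτiso.app T).symm
  exact ⟨coyoneda_map_mor₁_injective htri fun g => hb.comp_mor₃_eq_zero htri hC₀ hshift g,
    hb.coyoneda_map_surjective hnp, coyoneda_range_map_mor₁_eq_ker htri _,
    hb.not_splitEpi_map _ (fun ψ => (hker _ _ ψ).mp) hnonsplit hC₀,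
    fun Y hY => hb.map _ (hdense Y hY), fun Y hY => IsLeftAlmostSplit.map _ hlas (hdense Y hY)⟩
end

section
/- Let H be a finite dimensional hereditary algebra, T a tilting module, and let X be a module in Sub(τT) (equivalently Hom(T,X) = 0). Suppose 0 → X → C → K → 0 is exact with X → C a minimal left add(τT)-approximation. Then Hom(T, K) = 0, i.e., K also lies in the torsion-free class F_T = Sub(τT). -/
open CategoryTheory

/-!
Apply `Hom(-, τT)` to `0 → X → C → K → 0`: in
`Hom(C, τT) → Hom(X, τT) → Ext¹(K, τT) → Ext¹(C, τT)` the first map is onto because `f` is a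
left `add(τT)`-approximation, and the last group vanishes because `C ∈ add(τT)`,
`Ext¹(τT, τT) = 0` and `Ext¹` is additive. Hence `Ext¹(K, τT) = 0`, and the AR-formula gives
`Hom(T, K) = 0`. Over a hereditary ring `Ext¹(M, N)` is the cokernel of
`Hom(P, N) → Hom(ker p, N)` for any projective presentation `p : P ↠ M`, which turns the
exactness argument into a diagram chase with kernels of linear maps.
-/

universe u v w

section LinearAlgebra
open LinearMap

variable {Λ : Type*} [Ring Λ] {P C K N : Type*} [AddCommGroup P] [Module Λ P]
  [AddCommGroup C] [Module Λ C] [AddCommGroup K] [Module Λ K] [AddCommGroup N] [Module Λ N]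

def Submodule.MapsExtend (S : Submodule Λ P) (N : Type*) [AddCommGroup N] [Module Λ N] :
    Prop :=
  ∀ u : S →ₗ[Λ] N, ∃ v : P →ₗ[Λ] N, v ∘ₗ S.subtype = u

theorem LinearMap.exists_comp_eq_of_surjective_of_ker_le (w : P →ₗ[Λ] C)
    (hw : Function.Surjective w) (u : P →ₗ[Λ] N) (h : ker w ≤ ker u) :
    ∃ v : C →ₗ[Λ] N, v ∘ₗ w = u :=
  ⟨(ker w).liftQ u h ∘ₗ (w.quotKerEquivOfSurjective hw).symm.toLinearMap, by
    ext x
    simp [quotKerEquivOfSurjective_symm_apply]⟩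

theorem Submodule.mapsExtend_range_of_injective {X : Type*} [AddCommGroup X] [Module Λ X]
    {f : X →ₗ[Λ] C} (hf : Function.Injective f)
    (hext : ∀ u : X →ₗ[Λ] N, ∃ v : C →ₗ[Λ] N, v ∘ₗ f = u) :
    (LinearMap.range f).MapsExtend N := by
  intro u
  obtain ⟨v, hv⟩ := hext (u ∘ₗ (LinearEquiv.ofInjective f hf).toLinearMap)
  refine ⟨v, LinearMap.ext fun ⟨_, x, rfl⟩ => ?_⟩
  exact LinearMap.congr_fun hv x

/-- Read through presentations, this is the exactness of
`Hom(C, N) → Hom(ker g, N) → Ext¹(K, N) → Ext¹(C, N)` at `Ext¹(K, N)`. -/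
theorem Submodule.MapsExtend.ker_comp {q : P →ₗ[Λ] C} {g : C →ₗ[Λ] K}
    (hq : Function.Surjective q) (hC : (ker q).MapsExtend N) (hg : (ker g).MapsExtend N) :
    (ker (g ∘ₗ q)).MapsExtend N := by
  intro u
  obtain ⟨v₀, hv₀⟩ := hC (u ∘ₗ Submodule.inclusion (ker_le_ker_comp q g))
  let w : ker (g ∘ₗ q) →ₗ[Λ] ker g := q.restrict fun x hx => hx
  have hw : Function.Surjective w := by
    rintro ⟨y, hy⟩
    obtain ⟨x, rfl⟩ := hq y
    exact ⟨⟨x, hy⟩, rfl⟩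
  have hker : ker w ≤ ker (u - v₀ ∘ₗ (ker (g ∘ₗ q)).subtype) := by
    intro x hx
    have hxq : (x : P) ∈ ker q := congrArg Subtype.val hx
    rw [mem_ker, LinearMap.sub_apply, sub_eq_zero]
    exact (LinearMap.congr_fun hv₀ ⟨x, hxq⟩).symm
  obtain ⟨ū, hū⟩ := w.exists_comp_eq_of_surjective_of_ker_le hw _ hker
  obtain ⟨h, hh⟩ := hg ū
  refine ⟨v₀ + h ∘ₗ q, LinearMap.ext fun x => ?_⟩
  have hqx : h (q x) = ū (w x) := LinearMap.congr_fun hh (w x)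
  have hwx : ū (w x) = u x - v₀ x := LinearMap.congr_fun hū x
  simp [hqx, hwx]

end LinearAlgebra

section TwoTermResolution

open Limits

variable {Λ : Type u} [Ring Λ]

def twoTermComplex (P : ModuleCat.{v} Λ) (S : Submodule Λ P) :
    ChainComplex (ModuleCat.{v} Λ) ℕ where
  X n := match n with
    | 0 => P
    | 1 => ModuleCat.of Λ S
    | _ => ModuleCat.of Λ PUnit.{v + 1}
  d i j := match i, j with
    | 1, 0 => ModuleCat.ofHom S.subtype
    | _, _ => 0
  shape i j h := by
    match i, j with
    | 1, 0 => exact absurd rfl h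
    | 0, j => rfl
    | 1, j + 1 => rfl
    | i + 2, j => rfl
  d_comp_d' i j k hij hjk := by
    simp only [ComplexShape.down_Rel] at hij hjk
    subst hij hjk
    match k with
    | 0 => exact zero_comp
    | k + 1 => exact zero_comp

noncomputable def twoTermResolution [Small.{v} Λ] {M : ModuleCat.{v} Λ} (P : Type v)
    [AddCommGroup P] [Module Λ P] [Module.Projective Λ P] (p : P →ₗ[Λ] M)
    (hp : Function.Surjective p) (hker : Module.Projective Λ (LinearMap.ker p)) : ProjectiveResolution M where
  complex := twoTermComplex (ModuleCat.of Λ P) (LinearMap.ker p)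
  projective n := by
    match n with
    | 0 => exact (IsProjective.iff_projective _).1 inferInstance
    | 1 => exact (IsProjective.iff_projective _).1 hker
    | n + 2 => exact (ModuleCat.isZero_of_subsingleton (ModuleCat.of Λ PUnit.{v + 1})).projective
  π := (ChainComplex.toSingle₀Equiv _ _).symm ⟨ModuleCat.ofHom p, by
    ext ⟨x, hx⟩
    exact hx⟩
  quasiIso := ⟨fun n => by
    cases n with
    | zero =>
      rw [ChainComplex.quasiIsoAt₀_iff, ShortComplex.quasiIso_iff_of_zeros']
      · constructor
        · rw [ShortComplex.moduleCat_exact_iff]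
          intro x hx
          exact ⟨⟨x, hx⟩, rfl⟩
        · rw [ModuleCat.epi_iff_surjective]
          exact hp
      all_goals rfl
    | succ n =>
      rw [quasiIsoAt_iff_exactAt']
      · match n with
        | 0 =>
          rw [HomologicalComplex.exactAt_iff' _ 2 1 0 (by simp) (by simp)]
          refine (ShortComplex.exact_iff_mono _ rfl).2 ?_
          rw [ModuleCat.mono_iff_injective]
          exact Subtype.val_injective
        | n + 1 =>
          rw [HomologicalComplex.exactAt_iff' _ (n + 3) (n + 2) (n + 1) (by simp) (by simp)]
          exact ShortComplex.exact_of_isZero_X₂ _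
            (ModuleCat.isZero_of_subsingleton (ModuleCat.of Λ PUnit.{v + 1}))
      · apply ChainComplex.exactAt_succ_single_obj⟩

end TwoTermResolution

theorem isZero_ext1_iff_mapsExtend {Λ : Type} [Ring Λ] {M : ModuleCat.{0} Λ}
    (N : ModuleCat.{0} Λ) (P : Type) [AddCommGroup P] [Module Λ P] [Module.Projective Λ P]
    (p : P →ₗ[Λ] M) (hp : Function.Surjective p) (hker : Module.Projective Λ (LinearMap.ker p)) :
    Limits.IsZero (ext1 Λ M N) ↔ (LinearMap.ker p).MapsExtend N := by
  let R := twoTermResolution P p hp hker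
  let Y := R.complex.linearYonedaObj ℤ N
  have hd₂₁ : R.complex.d 2 1 = 0 := rfl
  rw [ext1, (R.isoExt (R := ℤ) 1 N).isZero_iff, ← HomologicalComplex.exactAt_iff_isZero_homology,
    HomologicalComplex.exactAt_iff' _ 0 1 2 (by simp) (by simp),
    ShortComplex.moduleCat_exact_iff]
  constructor
  · intro h u
    obtain ⟨v, hv⟩ := h (ModuleCat.ofHom u) (by
      change (Y.d 1 2) (ModuleCat.ofHom u) = 0
      rw [ChainComplex.linearYonedaObj_d]
      change R.complex.d 2 1 ≫ ModuleCat.ofHom u = 0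
      rw [hd₂₁]
      exact Limits.zero_comp)
    exact ⟨v.hom, congrArg ModuleCat.Hom.hom hv⟩
  · intro h u _
    obtain ⟨v, hv⟩ := h u.hom
    exact ⟨ModuleCat.ofHom v, ModuleCat.hom_ext hv⟩

namespace CategoryTheory

instance projectiveResolutions_additive {C : Type*} [Category* C] [Abelian C]
    [HasProjectiveResolutions C] : (projectiveResolutions C).Additive where
  map_add {_ _ f g} :=
    (HomotopyCategory.eq_of_homotopy _ _ (ProjectiveResolution.liftHomotopy (f + g) _
      (ProjectiveResolution.lift f _ _ + ProjectiveResolution.lift g _ _) (by simp)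
      (by simp))).trans (Functor.map_add _)

instance Functor.leftDerived_additive {C D : Type*} [Category* C] [Abelian C] [Category* D]
    [Abelian D] [HasProjectiveResolutions C] (F : C ⥤ D) [F.Additive] (n : ℕ) :
    (F.leftDerived n).Additive := by
  unfold Functor.leftDerived Functor.leftDerivedToHomotopyCategory
  infer_instance

end CategoryTheory

section AddClosure

open Limits

variable {Λ : Type} [Ring Λ]

theorem memAdd_self (T : ModuleCat Λ) : memAdd Λ T T :=
  ⟨1, LinearMap.pi fun _ => LinearMap.id, LinearMap.proj 0, rfl⟩

theorem memAdd.of_linearEquiv {T : ModuleCat.{u} Λ} {X : ModuleCat.{v} Λ} {Y : ModuleCat.{w} Λ}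
    (e : X ≃ₗ[Λ] Y) (h : memAdd Λ T Y) : memAdd Λ T X := by
  obtain ⟨n, i, p, hpi⟩ := h
  refine ⟨n, i ∘ₗ e.toLinearMap, e.symm.toLinearMap ∘ₗ p, LinearMap.ext fun x => ?_⟩
  simpa using congrArg e.symm (LinearMap.congr_fun hpi (e x))

theorem memAdd.small {T : ModuleCat.{u} Λ} {X : ModuleCat.{v} Λ} (h : memAdd Λ T X) :
    Small.{u} X := by
  obtain ⟨n, i, p, hpi⟩ := h
  exact small_of_injective (f := i) (LinearMap.injective_of_comp_eq_id i p hpi)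

theorem CategoryTheory.Functor.isZero_obj_of_memAdd {D : Type*} [Category* D] [Preadditive D]
    (G : ModuleCat.{v} Λ ⥤ D) [G.Additive] {Z M : ModuleCat.{v} Λ} (hZ : IsZero (G.obj Z))
    (hM : memAdd Λ Z M) : IsZero (G.obj M) := by
  obtain ⟨n, i, p, hpi⟩ := hM
  have hid : 𝟙 M = ∑ j : Fin n,
      ModuleCat.ofHom (LinearMap.proj j ∘ₗ i) ≫ ModuleCat.ofHom (p ∘ₗ LinearMap.single Λ _ j) := by
    ext x
    simpa [← _root_.map_sum, Finset.univ_sum_single] using (LinearMap.congr_fun hpi x).symm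
  rw [IsZero.iff_id_eq_zero, ← G.map_id, hid, G.map_sum]
  exact Finset.sum_eq_zero fun j _ => by rw [G.map_comp, hZ.eq_zero_of_src (G.map _), comp_zero]

theorem isZero_ext1_of_memAdd {Z M N : ModuleCat.{0} Λ} (hZ : IsZero (ext1 Λ Z N))
    (hM : memAdd Λ Z M) : IsZero (ext1 Λ M N) :=
  ((((linearYoneda ℤ (ModuleCat Λ)).obj N).rightOp.leftDerived 1).isZero_obj_of_memAdd
    hZ.op hM).unop

end AddClosure

theorem projective_submodule_of_hereditary {Λ : Type} [Ring Λ]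
    (hher : ∀ P : ModuleCat.{u} Λ, Projective P →
      ∀ S : Submodule Λ P, Projective (ModuleCat.of Λ S))
    {P : Type} [AddCommGroup P] [Module Λ P] [Module.Projective Λ P] (S : Submodule Λ P) :
    Module.Projective Λ S := by
  let e : P ≃ₗ[Λ] ULift.{u} P := ULift.moduleEquiv.symm
  have : Module.Projective Λ (ULift.{u} P) := Module.Projective.of_equiv e
  have hS : Projective (ModuleCat.of Λ (S.map e.toLinearMap)) :=
    hher (ModuleCat.of Λ (ULift.{u} P)) ((IsProjective.iff_projective _).1 this) _
  have : Module.Projective Λ (S.map e.toLinearMap) := (IsProjective.iff_projective _).2 hS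
  exact Module.Projective.of_equiv (e.submoduleMap S).symm

theorem stmt18_general (H : Type) [Ring H]
    (hher : ∀ P : ModuleCat H, Projective P →
      ∀ N : Submodule H P, Projective (ModuleCat.of H N))
    (T : ModuleCat H)
    (τT : ModuleCat H)
    (hextτ : Limits.IsZero (ext1 H τT τT))
    (hAR : ∀ Y : ModuleCat.{0} H, Module.Finite H Y →
      Limits.IsZero (ext1 H Y τT) → ∀ f : T →ₗ[H] Y, f = 0)
    (X C K : ModuleCat H) [Module.Finite H K]
    (f : X →ₗ[H] C) (g : C →ₗ[H] K)
    (hf : Function.Injective f) (hg : Function.Surjective g)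
    (hexact : LinearMap.range f = LinearMap.ker g)
    (happrox : IsMinimalLeftAddApprox H τT X C f) :
    ∀ φ : T →ₗ[H] K, φ = 0 := by
  -- `ext1` and `hAR` only see modules in `Type`, so `C` and `K` are replaced by small copies.
  have : Small.{0} C := happrox.1.small
  have : Small.{0} K := Module.Finite.small H K
  let eC := Shrink.linearEquiv H C
  let eK := Shrink.linearEquiv H K
  let q := Finsupp.linearCombination H (id : Shrink.{0} C → Shrink.{0} C)
  have hq : Function.Surjective q := Finsupp.linearCombination_id_surjective H _
  have hC₀ : Limits.IsZero (ext1 H (.of H (Shrink.{0} C)) τT) :=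
    isZero_ext1_of_memAdd hextτ (happrox.1.of_linearEquiv eC)
  have hC : (LinearMap.ker q).MapsExtend τT :=
    (isZero_ext1_iff_mapsExtend τT _ q hq (projective_submodule_of_hereditary hher _)).1 hC₀
  have hkerg : (LinearMap.ker g).MapsExtend τT :=
    hexact ▸ Submodule.mapsExtend_range_of_injective hf (happrox.2.1 τT (memAdd_self τT))
  have hK : (LinearMap.ker (g ∘ₗ eC.toLinearMap ∘ₗ q)).MapsExtend τT :=
    .ker_comp (eC.surjective.comp hq) (by rwa [LinearEquiv.ker_comp]) hkerg
  let p := eK.symm.toLinearMap ∘ₗ g ∘ₗ eC.toLinearMap ∘ₗ q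
  have hp : Function.Surjective p := eK.symm.surjective.comp (hg.comp (eC.surjective.comp hq))
  have hK₀ : Limits.IsZero (ext1 H (ModuleCat.of H (Shrink.{0} K)) τT) :=
    (isZero_ext1_iff_mapsExtend τT _ p hp (projective_submodule_of_hereditary hher _)).2
      (by rwa [LinearEquiv.ker_comp])
  intro φ
  have hφ := hAR _ inferInstance hK₀ (eK.symm.toLinearMap ∘ₗ φ)
  ext x
  simpa using LinearMap.congr_fun hφ x

/-- Let `H` be a finite dimensional hereditary algebra, `T` a tilting module and `τT` its
AR-translate, so that `F_T = {X : Hom(T,X) = 0} = Sub(τT)`, `Ext¹(τT, τT) = 0`, and (by the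
AR-formula `D Ext¹(Y, τT) ≅ Hom(T, Y)`) any `Y` with `Ext¹(Y, τT) = 0` satisfies
`Hom(T, Y) = 0`.  If `X ∈ Sub(τT)` and `0 → X → C → K → 0` is exact with `X → C` a minimal
left `add(τT)`-approximation, then `Hom(T, K) = 0`, i.e. `K` also lies in `F_T = Sub(τT)`. -/
theorem stmt18 (k : Type) [Field k] (H : Type) [Ring H] [Algebra k H]
    [FiniteDimensional k H]
    (hher : ∀ P : ModuleCat H, Projective P →
      ∀ N : Submodule H P, Projective (ModuleCat.of H N))
    (T : ModuleCat H) [Module.Finite H T] (hT : IsTilting H T)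
    (τT : ModuleCat H) [Module.Finite H τT]
    (hτT : ∀ Y : ModuleCat.{0} H, Module.Finite H Y →
      ((∀ f : T →ₗ[H] Y, f = 0) ↔ memSub H τT Y))
    (hextτ : Limits.IsZero (ext1 H τT τT))
    (hAR : ∀ Y : ModuleCat.{0} H, Module.Finite H Y →
      Limits.IsZero (ext1 H Y τT) → ∀ f : T →ₗ[H] Y, f = 0)
    (X C K : ModuleCat H) [Module.Finite H X] [Module.Finite H C] [Module.Finite H K]
    (hX : ∀ f : T →ₗ[H] X, f = 0)
    (f : X →ₗ[H] C) (g : C →ₗ[H] K)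
    (hf : Function.Injective f) (hg : Function.Surjective g)
    (hexact : LinearMap.range f = LinearMap.ker g)
    (happrox : IsMinimalLeftAddApprox H τT X C f) :
    ∀ φ : T →ₗ[H] K, φ = 0 :=
  stmt18_general H hher T τT hextτ hAR X C K f g hf hg hexact happrox
end
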